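/- For a d-dimensional density matrix ρ with purity P(ρ) = Tr(ρ²), let k be the integer with 1/k ≤ P(ρ) ≤ 1/(k-1) and α = 1/k - √((1-1/k)(P(ρ)-1/k)). Then the von Neumann entropy satisfies S(ρ) ≥ -(1-α) log((1-α)/(k-1)) - α log α. -/

import Mathlib

open scoped ComplexOrder

/-- Von Neumann entropy (base 2) of a Hermitian matrix, via its eigenvalues. -/
noncomputable def vnEntropy {n : Type*} [Fintype n] [DecidableEq n]
    {ρ : Matrix n n ℂ} (hρ : ρ.IsHermitian) : ℝ :=
  -∑ i, hρ.eigenvalues i * Real.logb 2 (hρ.eigenvalues i)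

/-- Purity Tr(ρ²) of a matrix. -/
noncomputable def purity {n : Type*} [Fintype n] (ρ : Matrix n n ℂ) : ℝ :=
  ((ρ * ρ).trace).re

/-!
The entropy of a probability vector with purity `P` is at least the minimum of the entropy over
the compact set of probability vectors with purity `P`. At a minimiser `q`, rotating any three
positive entries about the diagonal axis preserves both `∑ qᵢ` and `∑ qᵢ²`, so it cannot decrease
the entropy. By strict concavity of `log`, the first-order condition excludes three distinct
positive values, and the second-order condition excludes a pattern `(x, y, y)` with `y < x`.
So the positive entries of `q` are `m` copies of some `u` and at most one smaller value `v`, and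
the two constraints force `m = k - 1`, `v = α`, `u = (1 - α) / (k - 1)` (or `q` uniform on `k`
points), at which the entropy equals the claimed bound.
-/

open Real Filter Topology Finset

theorem IsLocalMin.nonneg_of_hasDerivAt_of_hasDerivAt {f f' : ℝ → ℝ} {a c : ℝ}
    (h : IsLocalMin f a) (hf : ∀ᶠ x in 𝓝 a, HasDerivAt f (f' x) x)
    (hf' : HasDerivAt f' c a) : 0 ≤ c := by
  -- otherwise `a` is also a local maximum, so `f` is constant near `a`
  by_contra! hc
  have hderiv : deriv f =ᶠ[𝓝 a] f' := hf.mono fun x hx => hx.deriv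
  have hc' : deriv (deriv f) a = c := (hf'.congr_of_eventuallyEq hderiv).deriv
  have hmax : IsLocalMax f a :=
    isLocalMax_of_deriv_deriv_neg (hc' ▸ hc) (hderiv.self_of_nhds ▸ h.hasDerivAt_eq_zero
      hf.self_of_nhds) hf.self_of_nhds.continuousAt
  have hconst : f =ᶠ[𝓝 a] fun _ => f a :=
    (h.and hmax).mono fun x hx => le_antisymm hx.2 hx.1
  have : deriv (deriv f) a = 0 := by
    rw [(hconst.deriv).deriv_eq]
    simp
  linarith

/-- The first coordinate of the rotation of `(x, y, z)` by the angle `θ` about the axis `(1, 1, 1)`;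
the other two are `diagRotation y z x θ` and `diagRotation z x y θ`. -/
noncomputable def diagRotation (x y z θ : ℝ) : ℝ :=
  (x + y + z) / 3 + cos θ * (x - (x + y + z) / 3) + sin θ * ((y - z) / √3)

noncomputable def diagRotationDeriv (x y z θ : ℝ) : ℝ :=
  -sin θ * (x - (x + y + z) / 3) + cos θ * ((y - z) / √3)

noncomputable def diagRotationEntropy (x y z θ : ℝ) : ℝ :=
  negMulLog (diagRotation x y z θ) + negMulLog (diagRotation y z x θ) +
    negMulLog (diagRotation z x y θ)

noncomputable def diagRotationEntropyDeriv (x y z θ : ℝ) : ℝ :=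
  (-log (diagRotation x y z θ) - 1) * diagRotationDeriv x y z θ +
    (-log (diagRotation y z x θ) - 1) * diagRotationDeriv y z x θ +
    (-log (diagRotation z x y θ) - 1) * diagRotationDeriv z x y θ

@[simp] lemma diagRotation_zero (x y z : ℝ) : diagRotation x y z 0 = x := by
  simp [diagRotation]

@[simp] lemma diagRotationDeriv_zero (x y z : ℝ) : diagRotationDeriv x y z 0 = (y - z) / √3 := by
  simp [diagRotationDeriv]

lemma diagRotation_add_add (x y z θ : ℝ) :
    diagRotation x y z θ + diagRotation y z x θ + diagRotation z x y θ = x + y + z := by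
  simp only [diagRotation]; ring

lemma diagRotation_sq_add_sq_add_sq (x y z θ : ℝ) :
    diagRotation x y z θ ^ 2 + diagRotation y z x θ ^ 2 + diagRotation z x y θ ^ 2 =
      x ^ 2 + y ^ 2 + z ^ 2 := by
  have h3 : √3 ^ 2 = 3 := Real.sq_sqrt (by norm_num)
  have hcs := cos_sq_add_sin_sq θ
  simp only [diagRotation]
  field_simp
  linear_combination (6 * √3 ^ 2 * (x ^ 2 + y ^ 2 + z ^ 2 - x * y - x * z - y * z)) * hcs +
    (-6 * sin θ ^ 2 * (x ^ 2 + y ^ 2 + z ^ 2 - x * y - x * z - y * z)) * h3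

lemma hasDerivAt_diagRotation (x y z θ : ℝ) :
    HasDerivAt (diagRotation x y z) (diagRotationDeriv x y z θ) θ :=
  (((hasDerivAt_cos θ).mul_const _).const_add _).fun_add ((hasDerivAt_sin θ).mul_const _)

lemma hasDerivAt_diagRotationDeriv (x y z θ : ℝ) :
    HasDerivAt (diagRotationDeriv x y z)
      (-cos θ * (x - (x + y + z) / 3) + -sin θ * ((y - z) / √3)) θ :=
  ((hasDerivAt_sin θ).fun_neg.mul_const (x - (x + y + z) / 3)).fun_add
    ((hasDerivAt_cos θ).mul_const ((y - z) / √3))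

lemma eventually_pos_diagRotation {x : ℝ} (hx : 0 < x) (y z : ℝ) :
    ∀ᶠ θ in 𝓝 0, 0 < diagRotation x y z θ := by
  simpa using (hasDerivAt_diagRotation x y z 0).continuousAt.eventually
    (lt_mem_nhds (a := 0) (by simpa using hx))

lemma eventually_hasDerivAt_diagRotationEntropy {x y z : ℝ} (hx : 0 < x) (hy : 0 < y)
    (hz : 0 < z) :
    ∀ᶠ θ in 𝓝 0, HasDerivAt (diagRotationEntropy x y z) (diagRotationEntropyDeriv x y z θ) θ := by
  filter_upwards [eventually_pos_diagRotation hx y z, eventually_pos_diagRotation hy z x,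
    eventually_pos_diagRotation hz x y] with θ h₁ h₂ h₃
  exact (((hasDerivAt_negMulLog h₁.ne').comp θ (hasDerivAt_diagRotation x y z θ)).fun_add
    ((hasDerivAt_negMulLog h₂.ne').comp θ (hasDerivAt_diagRotation y z x θ))).fun_add
    ((hasDerivAt_negMulLog h₃.ne').comp θ (hasDerivAt_diagRotation z x y θ))

lemma hasDerivAt_neg_log_sub_one_mul_diagRotationDeriv {x : ℝ} (hx : 0 < x) (y z : ℝ) :
    HasDerivAt (fun θ => (-log (diagRotation x y z θ) - 1) * diagRotationDeriv x y z θ)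
      (-((y - z) / √3) ^ 2 / x + (log x + 1) * (x - (x + y + z) / 3)) 0 := by
  have hlog :=
    ((hasDerivAt_diagRotation x y z 0).log (by simpa using hx.ne')).fun_neg.sub_const 1
  refine (hlog.fun_mul (hasDerivAt_diagRotationDeriv x y z 0)).congr_deriv ?_
  simp only [diagRotation_zero, diagRotationDeriv_zero, cos_zero, sin_zero]
  field_simp
  ring

lemma hasDerivAt_diagRotationEntropyDeriv {x y z : ℝ} (hx : 0 < x) (hy : 0 < y)
    (hz : 0 < z) :
    HasDerivAt (diagRotationEntropyDeriv x y z)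
      ((-((y - z) / √3) ^ 2 / x + (log x + 1) * (x - (x + y + z) / 3)) +
        (-((z - x) / √3) ^ 2 / y + (log y + 1) * (y - (y + z + x) / 3)) +
        (-((x - y) / √3) ^ 2 / z + (log z + 1) * (z - (z + x + y) / 3))) 0 :=
  ((hasDerivAt_neg_log_sub_one_mul_diagRotationDeriv hx y z).fun_add
    (hasDerivAt_neg_log_sub_one_mul_diagRotationDeriv hy z x)).fun_add
    (hasDerivAt_neg_log_sub_one_mul_diagRotationDeriv hz x y)

lemma IsLocalMin.log_mul_sub_add_eq_zero_of_diagRotationEntropy {x y z : ℝ} (hx : 0 < x)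
    (hy : 0 < y) (hz : 0 < z) (h : IsLocalMin (diagRotationEntropy x y z) 0) :
    log x * (y - z) + log y * (z - x) + log z * (x - y) = 0 := by
  have h0 :=
    h.hasDerivAt_eq_zero (eventually_hasDerivAt_diagRotationEntropy hx hy hz).self_of_nhds
  simp only [diagRotationEntropyDeriv, diagRotation_zero, diagRotationDeriv_zero] at h0
  field_simp at h0
  linear_combination -h0

lemma IsLocalMin.sum_sq_div_le_of_diagRotationEntropy {x y z : ℝ} (hx : 0 < x)
    (hy : 0 < y) (hz : 0 < z) (h : IsLocalMin (diagRotationEntropy x y z) 0) :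
    (y - z) ^ 2 / x + (z - x) ^ 2 / y + (x - y) ^ 2 / z ≤
      log x * (2 * x - y - z) + log y * (2 * y - z - x) + log z * (2 * z - x - y) := by
  have h0 := h.nonneg_of_hasDerivAt_of_hasDerivAt
    (eventually_hasDerivAt_diagRotationEntropy hx hy hz)
    (hasDerivAt_diagRotationEntropyDeriv hx hy hz)
  have h3 : √3 ^ 2 = 3 := sq_sqrt (by norm_num)
  have hdiv (a b : ℝ) : -(a / 3) / b = -(a / b) / 3 := by ring
  simp only [div_pow, h3, hdiv] at h0
  linarith

lemma not_isLocalMin_diagRotationEntropy_of_lt_of_lt {x y z : ℝ} (hz : 0 < z) (hzy : z < y)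
    (hyx : y < x) : ¬ IsLocalMin (diagRotationEntropy x y z) 0 := by
  intro h
  have hy := hz.trans hzy
  have hx := hy.trans hyx
  have hslope := strictConcaveOn_log_Ioi.slope_anti_adjacent hz hx hzy hyx
  rw [div_lt_div_iff₀ (by linarith) (by linarith)] at hslope
  have := h.log_mul_sub_add_eq_zero_of_diagRotationEntropy hx hy hz
  nlinarith

lemma not_isLocalMin_diagRotationEntropy_of_lt {x y : ℝ} (hy : 0 < y) (hyx : y < x) :
    ¬ IsLocalMin (diagRotationEntropy x y y) 0 := by
  intro h
  have hx := hy.trans hyx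
  have h2 := h.sum_sq_div_le_of_diagRotationEntropy hx hy hy
  have hlog := log_lt_sub_one_of_pos (div_pos hx hy) (div_ne_one_of_ne hyx.ne')
  rw [log_div hx.ne' hy.ne'] at hlog
  have : 2 * (x - y) * (x / y - 1) ≤ 2 * (x - y) * (log x - log y) := by
    convert h2 using 1 <;> field_simp <;> ring
  nlinarith

noncomputable def purityWeight (k : ℕ) (P : ℝ) : ℝ :=
  1 / (k : ℝ) - √((1 - 1 / (k : ℝ)) * (P - 1 / (k : ℝ)))

lemma purityWeight_quadratic {k : ℕ} {P : ℝ} (hk : 1 ≤ (k : ℝ)) (hP : 1 / (k : ℝ) ≤ P) :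
    k * purityWeight k P ^ 2 - 2 * purityWeight k P + 1 - (k - 1) * P = 0 ∧
      k * purityWeight k P ≤ 1 := by
  have hk0 : (k : ℝ) ≠ 0 := by positivity
  have hrad : 0 ≤ (1 - 1 / (k : ℝ)) * (P - 1 / k) :=
    mul_nonneg (by rw [sub_nonneg, div_le_one (by positivity)]; exact hk) (by linarith)
  have hW := sq_sqrt hrad
  have hW0 := sqrt_nonneg ((1 - 1 / (k : ℝ)) * (P - 1 / k))
  set W := √((1 - 1 / (k : ℝ)) * (P - 1 / k))
  rw [show purityWeight k P = 1 / k - W from rfl]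
  constructor
  · field_simp at hW ⊢
    linear_combination hW
  · field_simp
    nlinarith

noncomputable def purityEntropyBound (k : ℕ) (P : ℝ) : ℝ :=
  -((1 - purityWeight k P) * log ((1 - purityWeight k P) / ((k : ℝ) - 1))) -
    purityWeight k P * log (purityWeight k P)

lemma one_lt_of_le_one_div_sub_one {k P : ℝ} (hP : 0 < P) (hk : P ≤ 1 / (k - 1)) : 1 < k := by
  by_contra! h
  have : 1 / (k - 1) ≤ 0 := one_div_nonpos.2 (by linarith)
  linarith

lemma eq_and_eq_zero_or_add_one_eq_of_two_values {k m : ℕ} {u v P : ℝ} (hm : 1 ≤ m)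
    (hv : 0 ≤ v) (hvu : v < u) (h1 : m * u + v = 1) (h2 : m * u ^ 2 + v ^ 2 = P)
    (hk1 : 1 / (k : ℝ) ≤ P) (hk2 : P ≤ 1 / ((k : ℝ) - 1)) : m = k ∧ v = 0 ∨ m + 1 = k := by
  have hm' : (1 : ℝ) ≤ m := by exact_mod_cast hm
  have hP : 0 < P := by nlinarith
  have hk := one_lt_of_le_one_div_sub_one hP hk2
  have hkP : 1 ≤ k * P := by rwa [div_le_iff₀ (by linarith), mul_comm] at hk1
  have hkP' : (k - 1) * P ≤ 1 := by rwa [le_div_iff₀ (by linarith), mul_comm] at hk2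
  have hmP : 1 - m * P = v * (2 * m * u - (m - 1) * v) := by
    rw [← h2]; linear_combination (-(m * u + v + 1)) * h1
  have hmP' : (m + 1) * P - 1 = m * (u - v) ^ 2 := by
    rw [← h2]; linear_combination (m * u + v + 1) * h1
  have hmu : 0 < 2 * m * u - (m - 1) * v := by nlinarith
  have hmk : (m : ℝ) ≤ k := le_of_mul_le_mul_right (by nlinarith) hP
  have hkm : (k : ℝ) < m + 2 := by nlinarith
  rcases (by exact_mod_cast hmk.lt_or_eq : m < k ∨ m = k) with h | rfl
  · have : k < m + 2 := by exact_mod_cast hkm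
    right
    omega
  · refine Or.inl ⟨rfl, ?_⟩
    have : v * (2 * m * u - (m - 1) * v) = 0 := by nlinarith
    exact (mul_eq_zero.1 this).resolve_right hmu.ne'

lemma purityEntropyBound_eq_of_two_values {k m : ℕ} {u v P : ℝ} (hm : 1 ≤ m) (hv : 0 ≤ v)
    (hvu : v < u) (h1 : m * u + v = 1) (h2 : m * u ^ 2 + v ^ 2 = P)
    (hk1 : 1 / (k : ℝ) ≤ P) (hk2 : P ≤ 1 / ((k : ℝ) - 1)) :
    purityEntropyBound k P = m * negMulLog u + negMulLog v := by
  have hm' : (0 : ℝ) < m := by exact_mod_cast hm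
  have hP : 0 < P := by nlinarith [mul_pos hm' (pow_pos (hv.trans_lt hvu) 2)]
  have hk := one_lt_of_le_one_div_sub_one hP hk2
  rw [purityEntropyBound]
  rcases eq_and_eq_zero_or_add_one_eq_of_two_values hm hv hvu h1 h2 hk1 hk2 with
    ⟨rfl, rfl⟩ | rfl
  · obtain ⟨hαq, -⟩ := purityWeight_quadratic hk.le hk1
    set α := purityWeight m P
    have hmu : (m : ℝ) * u = 1 := by linarith
    have hmα : (m : ℝ) * α = 1 := by
      rw [← h2] at hαq
      have : ((m : ℝ) * α - 1) ^ 2 = 0 := by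
        linear_combination m * hαq + (m - 1) * (m * u + 1) * hmu
      linarith [pow_eq_zero_iff two_ne_zero |>.1 this]
    have hαu : α = u := mul_left_cancel₀ (by positivity) (hmα.trans hmu.symm)
    have hu' : (1 - α) / ((m : ℝ) - 1) = u := by
      rw [div_eq_iff (by linarith)]; linear_combination -hαu - hmu
    rw [hu', hαu, negMulLog_zero, negMulLog]
    linear_combination (log u) * hmu
  · obtain ⟨hαq, hαk⟩ := purityWeight_quadratic hk.le hk1
    set α := purityWeight (m + 1) P
    push_cast at *
    have hvq : (m + 1 : ℝ) * v ^ 2 - 2 * v + 1 - (m + 1 - 1) * P = 0 := by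
      rw [← h2]; linear_combination (v - m * u - 1) * h1
    have hvα : v = α := by
      have hmv : (m : ℝ) * v < m * u := mul_lt_mul_of_pos_left hvu (by linarith)
      have : (v - α) * ((m + 1) * (v + α) - 2) = 0 := by linear_combination hvq - hαq
      exact sub_eq_zero.1 ((mul_eq_zero.1 this).resolve_right (by nlinarith))
    have hu' : (1 - α) / ((m : ℝ) + 1 - 1) = u := by
      rw [div_eq_iff (by linarith)]; linear_combination -h1 + hvα
    rw [hu', ← hvα, negMulLog, negMulLog]
    linear_combination (log u) * h1

section

variable {ι : Type*} [Fintype ι]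

lemma Fintype.sum_comp_update [DecidableEq ι] (g : ℝ → ℝ) (q : ι → ℝ) (i : ι) (v : ℝ) :
    ∑ m, g (Function.update q i v m) = ∑ m, g (q m) - g (q i) + g v := by
  simp only [Function.apply_update (fun _ => g), Finset.sum_update_of_mem (mem_univ i),
    ← Finset.add_sum_erase _ _ (mem_univ i), sdiff_singleton_eq_erase]
  ring

noncomputable def shannonEntropy (p : ι → ℝ) : ℝ := ∑ i, negMulLog (p i)

variable (ι) in
def puritySlice (P : ℝ) : Set (ι → ℝ) := stdSimplex ℝ ι ∩ {p | ∑ i, p i ^ 2 = P}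

lemma exists_isMinOn_shannonEntropy {P : ℝ} (hne : (puritySlice ι P).Nonempty) :
    ∃ q ∈ puritySlice ι P, IsMinOn shannonEntropy (puritySlice ι P) q :=
  ((isCompact_stdSimplex ℝ ι).inter_right
    (isClosed_eq (by fun_prop) continuous_const)).exists_isMinOn hne
    (by unfold shannonEntropy; fun_prop)

lemma IsMinOn.isLocalMin_diagRotationEntropy [DecidableEq ι] {P : ℝ} {q : ι → ℝ}
    (hqS : q ∈ puritySlice ι P) (hq : IsMinOn shannonEntropy (puritySlice ι P) q)
    {i j l : ι} (hij : i ≠ j) (hil : i ≠ l) (hjl : j ≠ l)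
    (hi : 0 < q i) (hj : 0 < q j) (hl : 0 < q l) :
    IsLocalMin (diagRotationEntropy (q i) (q j) (q l)) 0 := by
  set r : ℝ → ι → ℝ := fun θ => Function.update (Function.update (Function.update q
    i (diagRotation (q i) (q j) (q l) θ)) j (diagRotation (q j) (q l) (q i) θ)) l
    (diagRotation (q l) (q i) (q j) θ)
  have hsum (g : ℝ → ℝ) (θ : ℝ) : ∑ m, g (r θ m) = ∑ m, g (q m) - (g (q i) + g (q j) + g (q l)) +
      (g (diagRotation (q i) (q j) (q l) θ) + g (diagRotation (q j) (q l) (q i) θ) +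
        g (diagRotation (q l) (q i) (q j) θ)) := by
    simp only [r, Fintype.sum_comp_update, Function.update_of_ne hjl.symm,
      Function.update_of_ne hil.symm, Function.update_of_ne hij.symm]
    ring
  filter_upwards [eventually_pos_diagRotation hi (q j) (q l),
    eventually_pos_diagRotation hj (q l) (q i), eventually_pos_diagRotation hl (q i) (q j)]
    with θ h₁ h₂ h₃
  have hrS : r θ ∈ puritySlice ι P := by
    obtain ⟨⟨hq0, hq1⟩, hq2⟩ := hqS
    refine ⟨⟨fun m => ?_, ?_⟩, ?_⟩
    · simp only [r, Function.update_apply]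
      split_ifs <;> first | positivity | exact hq0 m
    · rw [← hq1, ← sum_congr rfl fun m _ => id_eq (r θ m), hsum id]
      simp only [id, diagRotation_add_add]
      ring
    · change ∑ m, r θ m ^ 2 = P
      rw [← hq2, hsum (· ^ 2), diagRotation_sq_add_sq_add_sq]
      ring
  have : shannonEntropy q ≤ shannonEntropy (r θ) := hq hrS
  rw [shannonEntropy, shannonEntropy, hsum negMulLog] at this
  simp only [diagRotationEntropy, diagRotation_zero]
  linarith

lemma IsMinOn.eq_of_pos_of_lt [DecidableEq ι] {P : ℝ} {q : ι → ℝ}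
    (hqS : q ∈ puritySlice ι P) (hq : IsMinOn shannonEntropy (puritySlice ι P) q) {i₀ i j : ι}
    (hi : 0 < q i) (hii₀ : q i < q i₀) (hj : 0 < q j) (hji₀ : q j < q i₀) : i = j := by
  by_contra hij
  have hmin (a b : ι) (ha : q a < q i₀) (hb : q b < q i₀) (ha₀ : 0 < q a) (hb₀ : 0 < q b)
      (hab : a ≠ b) : IsLocalMin (diagRotationEntropy (q i₀) (q a) (q b)) 0 :=
    hq.isLocalMin_diagRotationEntropy hqS (fun h => (h ▸ ha).false) (fun h => (h ▸ hb).false)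
      hab (hi.trans hii₀) ha₀ hb₀
  rcases lt_trichotomy (q i) (q j) with h | h | h
  · exact not_isLocalMin_diagRotationEntropy_of_lt_of_lt hi h hji₀
      (hmin j i hji₀ hii₀ hj hi (Ne.symm hij))
  · exact not_isLocalMin_diagRotationEntropy_of_lt hi hii₀ (h ▸ hmin i j hii₀ hji₀ hi hj hij)
  · exact not_isLocalMin_diagRotationEntropy_of_lt_of_lt hj h hii₀ (hmin i j hii₀ hji₀ hi hj hij)

/-- Up to zero entries, `q` has `m` entries equal to `u` and one entry `v` (absent if `v = 0`). -/
lemma IsMinOn.exists_sum_comp_eq [DecidableEq ι] {P : ℝ} {q : ι → ℝ}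
    (hqS : q ∈ puritySlice ι P) (hq : IsMinOn shannonEntropy (puritySlice ι P) q) :
    ∃ (m : ℕ) (u v : ℝ), 1 ≤ m ∧ 0 ≤ v ∧ v < u ∧
      ∀ g : ℝ → ℝ, g 0 = 0 → ∑ i, g (q i) = m * g u + g v := by
  obtain ⟨⟨hq0, hq1⟩, -⟩ := id hqS
  have huniv : (univ : Finset ι).Nonempty := by
    by_contra h
    simp [not_nonempty_iff_eq_empty.1 h] at hq1
  obtain ⟨i₀, -, hmax⟩ := exists_max_image univ q huniv
  have hu : 0 < q i₀ := by
    by_contra! h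
    have : ∑ i, q i ≤ 0 := sum_nonpos fun i _ => (hmax i (mem_univ i)).trans h
    linarith
  set R := univ.filter fun i => 0 < q i ∧ q i < q i₀
  have hR : ∀ i ∈ R, ∀ j ∈ R, i = j := by
    intro i hi j hj
    simp only [R, mem_filter, mem_univ, true_and] at hi hj
    exact hq.eq_of_pos_of_lt hqS hi.1 hi.2 hj.1 hj.2
  have hRv : ∑ i ∈ R, q i < q i₀ ∧ ∀ g : ℝ → ℝ, g 0 = 0 → ∑ i ∈ R, g (q i) = g (∑ i ∈ R, q i) := by
    rcases R.eq_empty_or_nonempty with h | ⟨a, ha⟩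
    · simp [h, hu, eq_comm]
    · rw [eq_singleton_iff_unique_mem.2 ⟨ha, fun b hb => hR b hb a ha⟩]
      simp only [R, mem_filter] at ha
      simp [ha.2.2]
  refine ⟨#(univ.filter fun i => q i = q i₀), q i₀, ∑ i ∈ R, q i,
    card_pos.2 ⟨i₀, by simp⟩, sum_nonneg fun i _ => hq0 i, hRv.1, fun g hg => ?_⟩
  rw [← sum_filter_add_sum_filter_not univ (fun i => q i = q i₀), ← hRv.2 g hg,
    sum_congr rfl fun i hi => congrArg g (mem_filter.1 hi).2, sum_const, nsmul_eq_mul]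
  congr 1
  refine (sum_subset (fun i hi => ?_) fun i hi hiR => ?_).symm
  · simp only [R, mem_filter] at hi ⊢
    exact ⟨hi.1, hi.2.2.ne⟩
  · simp only [R, mem_filter, mem_univ, true_and, not_and, not_lt] at hi hiR
    have hlt : q i < q i₀ := (hmax i (mem_univ i)).lt_of_ne hi
    rw [le_antisymm (not_lt.1 fun h => (hiR h).not_gt hlt) (hq0 i), hg]

theorem purityEntropyBound_le_shannonEntropy {k : ℕ} {p : ι → ℝ} (hp : p ∈ stdSimplex ℝ ι)
    (hk1 : 1 / (k : ℝ) ≤ ∑ i, p i ^ 2) (hk2 : ∑ i, p i ^ 2 ≤ 1 / ((k : ℝ) - 1)) :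
    purityEntropyBound k (∑ i, p i ^ 2) ≤ shannonEntropy p := by
  classical
  obtain ⟨q, hqS, hq⟩ := exists_isMinOn_shannonEntropy ⟨p, hp, rfl⟩
  obtain ⟨m, u, v, hm, hv, hvu, hsum⟩ := hq.exists_sum_comp_eq hqS
  have h1 : m * u + v = 1 := (hsum id rfl).symm.trans hqS.1.2
  have h2 : m * u ^ 2 + v ^ 2 = ∑ i, p i ^ 2 :=
    (hsum (· ^ 2) (zero_pow two_ne_zero)).symm.trans hqS.2
  rw [purityEntropyBound_eq_of_two_values hm hv hvu h1 h2 hk1 hk2]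
  exact (hsum negMulLog negMulLog_zero).symm.trans_le (hq ⟨hp, rfl⟩)

end

namespace Matrix

variable {n : Type*} [Fintype n] [DecidableEq n] {A : Matrix n n ℂ}

lemma PosSemidef.eigenvalues_mem_stdSimplex (hA : A.PosSemidef) (htr : A.trace = 1) :
    hA.1.eigenvalues ∈ stdSimplex ℝ n := by
  refine ⟨hA.eigenvalues_nonneg, ?_⟩
  have := congrArg Complex.re (htr ▸ hA.1.trace_eq_sum_eigenvalues).symm
  simpa using this

lemma IsHermitian.purity_eq_sum_eigenvalues_sq (hA : A.IsHermitian) :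
    purity A = ∑ i, hA.eigenvalues i ^ 2 := by
  have hmul : A * A = Unitary.conjStarAlgAut ℂ _ hA.eigenvectorUnitary
      (diagonal (RCLike.ofReal ∘ hA.eigenvalues) * diagonal (RCLike.ofReal ∘ hA.eigenvalues)) := by
    rw [map_mul, ← hA.spectral_theorem]
  rw [purity, hmul, Unitary.conjStarAlgAut_apply, trace_mul_cycle, Unitary.coe_star_mul_self,
    one_mul, diagonal_mul_diagonal, trace_diagonal]
  simp [sq]

lemma IsHermitian.vnEntropy_eq (hA : A.IsHermitian) :
    vnEntropy hA = shannonEntropy hA.eigenvalues / log 2 := by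
  simp only [vnEntropy, shannonEntropy, logb, negMulLog, sum_div, ← sum_neg_distrib]
  congr 1 with i
  ring

end Matrix

/-- For a d-dimensional density matrix ρ with purity P = Tr(ρ²) and k the
integer with 1/k ≤ P ≤ 1/(k-1), setting α = 1/k - √((1-1/k)(P-1/k)), the von
Neumann entropy satisfies S(ρ) ≥ -(1-α) log((1-α)/(k-1)) - α log α. -/
theorem stmt9 (d k : ℕ) (ρ : Matrix (Fin d) (Fin d) ℂ) (hρ : ρ.PosSemidef)
    (htr : ρ.trace = 1)
    (hk1 : 1/(k:ℝ) ≤ purity ρ) (hk2 : purity ρ ≤ 1/((k:ℝ)-1)) :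
    let a : ℝ := 1/(k:ℝ) - Real.sqrt ((1 - 1/(k:ℝ)) * (purity ρ - 1/(k:ℝ)))
    (-((1 - a) * Real.logb 2 ((1 - a)/((k:ℝ)-1))) - a * Real.logb 2 a ≤
      vnEntropy hρ.1) := by
  intro a
  have hbound : purityEntropyBound k (purity ρ) ≤ shannonEntropy hρ.1.eigenvalues := by
    rw [hρ.1.purity_eq_sum_eigenvalues_sq] at hk1 hk2 ⊢
    exact purityEntropyBound_le_shannonEntropy (hρ.eigenvalues_mem_stdSimplex htr) hk1 hk2
  rw [hρ.1.vnEntropy_eq]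
  calc _ = purityEntropyBound k (purity ρ) / log 2 := by
        simp only [a, purityEntropyBound, purityWeight, logb]
        ring
    _ ≤ _ := div_le_div_of_nonneg_right hbound (log_pos one_lt_two).le
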